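/- Let p ∈ [1,∞] and let f(z) = Σ_α a_α z^α + Σ_{|α|≥1} conj(b_α) conj(z)^α be a pluriharmonic function from 𝔹_{ℓ_pⁿ} into the unit disk 𝔻. Then for every integer k ≥ 1 and every z ∈ 𝔹_{ℓ_pⁿ}, Σ_{|α|=k} (|a_α|² + |b_α|²) |z^α|² ≤ 16/π². -/

import Mathlib

/-!
Fix `z` in the ball and rotate it to `w = (e^{iθ_j} z_j)`; the ball is invariant under such
rotations. On the circle `t ↦ e^{it} w` the function `F(t) = f(e^{it} w)` is
`∑ₘ Pₘ(w) e^{imt} + conj (∑ₘ Qₘ(w) e^{imt})`, where `Pₘ`, `Qₘ` are the homogeneous parts of degree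
`m` of the series of `h` and `g`; hence `P_k(w)` and `conj Q_k(w)` are the Fourier coefficients of
`F` at `k` and `-k`. Testing `|F| ≤ 1` against the kernel `e^{-iα} e^{-ikt} + e^{-iβ} e^{ikt}`,
whose `L¹` norm over a period is `8` for every phase, gives `|P_k(w)| + |Q_k(w)| ≤ 4/π`.
Finally `θ ↦ P_k(w)` is a trigonometric polynomial; along `θ_j = (k+1)^j s` its frequencies are
distinct (base-`(k+1)` digits), and Parseval in `s` turns `|P_k|² + |Q_k|² ≤ 16/π²` into the
claimed bound on `∑ (|a_α|² + |b_α|²) |z^α|²`.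
-/

open scoped BigOperators ENNReal

open scoped Classical in
/-- The `p`-norm on `ℂ^n` for `p ∈ [1,∞]` (`ℝ≥0∞`-valued exponent):
the sup norm if `p = ∞`, and `(∑ ‖z j‖^p)^(1/p)` otherwise. -/
noncomputable def pnormE {n : ℕ} (p : ℝ≥0∞) (z : Fin n → ℂ) : ℝ :=
  if p = ∞ then ⨆ j, ‖z j‖ else (∑ j, ‖z j‖ ^ p.toReal) ^ (1 / p.toReal)

open Complex MeasureTheory intervalIntegral Finset.Nat
open scoped Real

theorem integral_exp_int_mul_I (m : ℤ) :
    ∫ t in (0 : ℝ)..2 * π, cexp (m * t * I) = if m = 0 then (2 * π : ℂ) else 0 := by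
  split_ifs with hm
  · simp [hm]
  · have hmI : (m : ℂ) * I ≠ 0 := mul_ne_zero (Int.cast_ne_zero.mpr hm) I_ne_zero
    have hperiod : cexp (m * I * (2 * π : ℝ)) = 1 := by
      rw [← exp_int_mul_two_pi_mul_I m]; push_cast; ring_nf
    simp_rw [mul_right_comm _ _ I]
    rw [integral_exp_mul_complex hmI, hperiod]
    simp

theorem norm_exp_int_mul_I (m : ℤ) (t : ℝ) : ‖cexp (m * t * I)‖ = 1 := by
  simp [norm_exp]

theorem continuous_exp_mul_I (c : ℂ) : Continuous fun t : ℝ => cexp (c * t * I) := by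
  fun_prop

theorem conj_exp_int_mul_I (m : ℤ) (t : ℝ) :
    (starRingEnd ℂ) (cexp (m * t * I)) = cexp (-m * t * I) := by
  rw [← exp_conj, map_mul, map_mul, conj_ofReal, conj_I, map_intCast]; ring_nf

theorem hasSum_integral_mul_exp {ι : Type*} [Countable ι] {c : ι → ℂ}
    (hc : Summable fun i => ‖c i‖) (d : ι → ℕ) {H : ℝ → ℂ}
    (hH : ∀ t : ℝ, HasSum (fun i => c i * cexp (d i * t * I)) (H t)) (m : ℤ) :
    HasSum (fun i => if (d i : ℤ) = m then 2 * π * c i else 0)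
      (∫ t in (0 : ℝ)..2 * π, H t * cexp (-m * t * I)) := by
  have hterm : ∀ i (t : ℝ), c i * cexp (d i * t * I) * cexp (-m * t * I)
      = c i * cexp (((d i - m : ℤ) : ℂ) * t * I) := fun i t => by
    rw [mul_assoc, ← Complex.exp_add]; push_cast; ring_nf
  have hsum := hasSum_integral_of_dominated_convergence (μ := volume) (a := 0) (b := 2 * π)
    (F := fun i t => c i * cexp (d i * t * I) * cexp (-m * t * I)) (fun i _ => ‖c i‖)
    (fun i => ((continuous_const.mul (continuous_exp_mul_I _)).mul
      (continuous_exp_mul_I _)).aestronglyMeasurable)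
    (fun i => ae_of_all _ fun t _ => by rw [hterm, norm_mul, norm_exp_int_mul_I, mul_one])
    (ae_of_all _ fun _ _ => hc) intervalIntegrable_const
    (ae_of_all _ fun t _ => (hH t).mul_right _)
  have hcoeff : ∀ i, ∫ t in (0 : ℝ)..2 * π, c i * cexp (d i * t * I) * cexp (-m * t * I)
      = if (d i : ℤ) = m then 2 * π * c i else 0 := fun i => by
    simp_rw [hterm, intervalIntegral.integral_const_mul, integral_exp_int_mul_I, sub_eq_zero]
    split_ifs <;> ring
  simpa only [hcoeff] using hsum

theorem integral_mul_exp_eq_of_hasSum {ι : Type*} [Countable ι] {c : ι → ℂ}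
    (hc : Summable fun i => ‖c i‖) (d : ι → ℕ) {H : ℝ → ℂ}
    (hH : ∀ t : ℝ, HasSum (fun i => c i * cexp (d i * t * I)) (H t)) (k : ℕ) {C : ℂ}
    (hC : HasSum (fun i => if d i = k then c i else 0) C) :
    ∫ t in (0 : ℝ)..2 * π, H t * cexp (-k * t * I) = 2 * π * C := by
  have := hasSum_integral_mul_exp hc d hH k
  simp only [Nat.cast_inj, Int.cast_natCast] at this
  exact this.unique (by simpa only [mul_ite, mul_zero] using hC.mul_left (2 * π : ℂ))

theorem integral_mul_exp_eq_zero {ι : Type*} [Countable ι] {c : ι → ℂ}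
    (hc : Summable fun i => ‖c i‖) (d : ι → ℕ) {H : ℝ → ℂ}
    (hH : ∀ t : ℝ, HasSum (fun i => c i * cexp (d i * t * I)) (H t)) {k : ℕ} (hk : k ≠ 0) :
    ∫ t in (0 : ℝ)..2 * π, H t * cexp (k * t * I) = 0 := by
  have := hasSum_integral_mul_exp hc d hH (-k)
  simp only [Int.cast_neg, Int.cast_natCast, neg_neg] at this
  refine this.unique ?_
  convert hasSum_zero with i
  rw [if_neg (by omega)]

theorem continuous_of_hasSum_mul_exp {ι : Type*} {c : ι → ℂ}
    (hc : Summable fun i => ‖c i‖) (d : ι → ℕ) {H : ℝ → ℂ}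
    (hH : ∀ t : ℝ, HasSum (fun i => c i * cexp (d i * t * I)) (H t)) : Continuous H := by
  rw [show H = fun t : ℝ => ∑' i, c i * cexp (d i * t * I) from
    funext fun t => (hH t).tsum_eq.symm]
  exact continuous_tsum (fun i => continuous_const.mul (continuous_exp_mul_I _)) hc
    fun i t => by rw [norm_mul, ← Int.cast_natCast, norm_exp_int_mul_I, mul_one]

theorem Function.Periodic.intervalIntegral_comp_int_mul_add {g : ℝ → ℝ}
    (hg : Function.Periodic g (2 * π)) (hgc : Continuous g) {m : ℤ} (hm : m ≠ 0) (ψ : ℝ) :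
    ∫ t in (0 : ℝ)..2 * π, g (m * t + ψ) = ∫ x in (0 : ℝ)..2 * π, g x := by
  have hm' : (m : ℝ) ≠ 0 := Int.cast_ne_zero.mpr hm
  have hend : (m : ℝ) * (2 * π) + ψ = ψ + m • (2 * π) := by rw [zsmul_eq_mul]; ring
  rw [integral_comp_mul_add _ hm', mul_zero, zero_add, hend,
    hg.intervalIntegral_add_zsmul_eq m ψ fun _ _ => hgc.intervalIntegrable _ _,
    hg.intervalIntegral_add_eq ψ 0, zero_add, zsmul_eq_mul, smul_eq_mul, inv_mul_cancel_left₀ hm']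

theorem integral_norm_exp_mul_I_sub_one :
    ∫ x in (0 : ℝ)..2 * π, ‖cexp (x * I) - 1‖ = 8 := by
  have hsin : ∀ x ∈ Set.uIcc 0 (2 * π), ‖cexp (x * I) - 1‖ = 2 * Real.sin (x / 2) := by
    intro x hx
    rw [Set.uIcc_of_le (by positivity)] at hx
    rw [mul_comm, norm_exp_I_mul_ofReal_sub_one, Real.norm_eq_abs, abs_of_nonneg]
    exact mul_nonneg zero_le_two (Real.sin_nonneg_of_nonneg_of_le_pi (by linarith [hx.1])
      (by linarith [hx.2]))
  rw [integral_congr hsin, intervalIntegral.integral_const_mul,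
    integral_comp_div (fun x => Real.sin x) two_ne_zero, integral_sin]
  norm_num

theorem integral_norm_exp_add_exp (k : ℤ) (hk : k ≠ 0) (α β : ℝ) :
    ∫ t in (0 : ℝ)..2 * π, ‖cexp (-α * I) * cexp (-k * t * I) + cexp (-β * I) * cexp (k * t * I)‖
      = 8 := by
  have hg : Function.Periodic (fun x : ℝ => ‖cexp (x * I) - 1‖) (2 * π) := fun x => by
    simp only [ofReal_add, add_mul, Complex.exp_add, ofReal_mul, ofReal_ofNat, exp_two_pi_mul_I,
      mul_one]
  have hgc : Continuous fun x : ℝ => ‖cexp (x * I) - 1‖ := by fun_prop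
  have hfactor : ∀ t : ℝ,
      ‖cexp (-α * I) * cexp (-k * t * I) + cexp (-β * I) * cexp (k * t * I)‖
        = ‖cexp (((2 * k : ℤ) * t + (α - β + π) : ℝ) * I) - 1‖ := by
    intro t
    set x : ℝ := (2 * k : ℤ) * t + (α - β + π)
    set y : ℝ := -k * t - α
    have hxy : (y : ℂ) * I + x * I = (-β * I + k * t * I) + π * I := by
      simp only [x, y]; push_cast; ring
    have hy : (y : ℂ) * I = -α * I + -k * t * I := by simp only [y]; push_cast; ring
    have hprod : cexp (-α * I) * cexp (-k * t * I) + cexp (-β * I) * cexp (k * t * I)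
        = -cexp (y * I) * (cexp (x * I) - 1) := by
      rw [mul_sub, mul_one, neg_mul (cexp _), ← Complex.exp_add (y * I), hxy,
        Complex.exp_add _ (π * I), exp_pi_mul_I, hy, Complex.exp_add, Complex.exp_add]
      ring
    rw [hprod, norm_mul, norm_neg, norm_exp_ofReal_mul_I, one_mul]
  simp_rw [hfactor]
  rw [hg.intervalIntegral_comp_int_mul_add hgc (by omega : (2 * k : ℤ) ≠ 0),
    integral_norm_exp_mul_I_sub_one]

theorem norm_integral_mul_exp_add_norm_le {F : ℝ → ℂ}
    (hF : IntervalIntegrable F volume 0 (2 * π)) (hF1 : ∀ t, ‖F t‖ ≤ 1) {k : ℤ} (hk : k ≠ 0) :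
    ‖∫ t in (0 : ℝ)..2 * π, F t * cexp (-k * t * I)‖
      + ‖∫ t in (0 : ℝ)..2 * π, F t * cexp (k * t * I)‖ ≤ 8 := by
  set A := ∫ t in (0 : ℝ)..2 * π, F t * cexp (-k * t * I)
  set B := ∫ t in (0 : ℝ)..2 * π, F t * cexp (k * t * I)
  have harg : ∀ z : ℂ, cexp (-z.arg * I) * z = ‖z‖ := fun z => by
    nth_rw 2 [← norm_mul_exp_arg_mul_I z]
    rw [mul_left_comm, ← Complex.exp_add, neg_mul, neg_add_cancel, Complex.exp_zero, mul_one]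
  set G : ℝ → ℂ := fun t =>
    cexp (-A.arg * I) * cexp (-k * t * I) + cexp (-B.arg * I) * cexp (k * t * I)
  have hGc : Continuous G := by fun_prop
  have hFGint : IntervalIntegrable (fun t => F t * G t) volume 0 (2 * π) :=
    hF.mul_continuousOn hGc.continuousOn
  have hFG : ∫ t in (0 : ℝ)..2 * π, F t * G t = ((‖A‖ + ‖B‖ : ℝ) : ℂ) := by
    have hsplit : ∀ t, F t * G t = cexp (-A.arg * I) * (F t * cexp (-k * t * I))
        + cexp (-B.arg * I) * (F t * cexp (k * t * I)) := fun t => by simp only [G]; ring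
    simp_rw [hsplit]
    rw [integral_add ((hF.mul_continuousOn (continuous_exp_mul_I _).continuousOn).const_mul _)
      ((hF.mul_continuousOn (continuous_exp_mul_I _).continuousOn).const_mul _),
      intervalIntegral.integral_const_mul, intervalIntegral.integral_const_mul, harg, harg,
      ofReal_add]
  have h2π : (0 : ℝ) ≤ 2 * π := by positivity
  calc ‖A‖ + ‖B‖ = ‖∫ t in (0 : ℝ)..2 * π, F t * G t‖ := by
        rw [hFG, norm_real, Real.norm_of_nonneg (by positivity)]
    _ ≤ ∫ t in (0 : ℝ)..2 * π, ‖F t * G t‖ := norm_integral_le_integral_norm h2π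
    _ ≤ ∫ t in (0 : ℝ)..2 * π, ‖G t‖ := by
        refine integral_mono_on h2π hFGint.norm (hGc.norm.intervalIntegrable _ _) fun t _ => ?_
        rw [norm_mul]
        exact mul_le_of_le_one_left (norm_nonneg _) (hF1 t)
    _ = 8 := integral_norm_exp_add_exp k hk _ _

theorem norm_add_norm_le_of_hasSum {ι : Type*} [Countable ι] {c e : ι → ℂ}
    (hc : Summable fun i => ‖c i‖) (he : Summable fun i => ‖e i‖) (d : ι → ℕ) {F H G : ℝ → ℂ}
    (hH : ∀ t : ℝ, HasSum (fun i => c i * cexp (d i * t * I)) (H t))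
    (hG : ∀ t : ℝ, HasSum (fun i => e i * cexp (d i * t * I)) (G t))
    (hF : ∀ t, F t = H t + (starRingEnd ℂ) (G t)) (hF1 : ∀ t, ‖F t‖ ≤ 1)
    {k : ℕ} (hk : k ≠ 0) {C E : ℂ}
    (hC : HasSum (fun i => if d i = k then c i else 0) C)
    (hE : HasSum (fun i => if d i = k then e i else 0) E) :
    ‖C‖ + ‖E‖ ≤ 4 / π := by
  have hHc := continuous_of_hasSum_mul_exp hc d hH
  have hGc := continuous_of_hasSum_mul_exp he d hG
  have hFc : Continuous F := by
    rw [funext hF]; exact hHc.add (continuous_conj.comp hGc)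
  have hsplit : ∀ m : ℤ, ∀ t : ℝ, F t * cexp (m * t * I)
      = H t * cexp (m * t * I) + (starRingEnd ℂ) (G t * cexp (-m * t * I)) := fun m t => by
    rw [hF, map_mul, ← Int.cast_neg, conj_exp_int_mul_I, Int.cast_neg, neg_neg]; ring
  have hHint : ∀ c : ℂ, IntervalIntegrable (fun t => H t * cexp (c * t * I)) volume 0 (2 * π) :=
    fun c => (hHc.mul (continuous_exp_mul_I _)).intervalIntegrable _ _
  have hGint : ∀ c : ℂ, IntervalIntegrable
      (fun t => (starRingEnd ℂ) (G t * cexp (c * t * I))) volume 0 (2 * π) := fun c =>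
    (continuous_conj.comp (hGc.mul (continuous_exp_mul_I _))).intervalIntegrable _ _
  have hA : ∫ t in (0 : ℝ)..2 * π, F t * cexp (-k * t * I) = 2 * π * C := by
    have := hsplit (-k)
    push_cast at this
    simp_rw [this]
    rw [integral_add (hHint _) (hGint _),
      intervalIntegral_conj, neg_neg, integral_mul_exp_eq_zero he d hG hk, map_zero, add_zero,
      integral_mul_exp_eq_of_hasSum hc d hH k hC]
  have hB : ∫ t in (0 : ℝ)..2 * π, F t * cexp (k * t * I) = 2 * π * (starRingEnd ℂ) E := by
    have := hsplit k
    push_cast at this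
    simp_rw [this]
    rw [integral_add (hHint _) (hGint _),
      intervalIntegral_conj, integral_mul_exp_eq_zero hc d hH hk, zero_add,
      integral_mul_exp_eq_of_hasSum he d hG k hE, map_mul, map_mul, conj_ofReal, map_ofNat]
  have hbound := norm_integral_mul_exp_add_norm_le (hFc.intervalIntegrable 0 (2 * π))
    hF1 (Int.natCast_ne_zero.mpr hk)
  push_cast at hbound
  rw [hA, hB] at hbound
  simp only [norm_mul, RCLike.norm_conj, norm_real, Real.norm_of_nonneg Real.pi_pos.le,
    Complex.norm_two] at hbound
  rw [le_div_iff₀ Real.pi_pos]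
  linarith

theorem integral_norm_sum_mul_exp_sq {ι : Type*} (s : Finset ι) (u : ι → ℂ) {N : ι → ℤ}
    (hN : Set.InjOn N s) :
    ∫ t in (0 : ℝ)..2 * π, ‖∑ i ∈ s, u i * cexp (N i * t * I)‖ ^ 2
      = 2 * π * ∑ i ∈ s, ‖u i‖ ^ 2 := by
  have hexpand : ∀ t : ℝ, ((‖∑ i ∈ s, u i * cexp (N i * t * I)‖ ^ 2 : ℝ) : ℂ)
      = ∑ i ∈ s, ∑ j ∈ s, u i * (starRingEnd ℂ) (u j) * cexp ((N i - N j : ℤ) * t * I) := by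
    intro t
    rw [ofReal_pow, ← mul_conj', map_sum, Finset.sum_mul_sum]
    refine Finset.sum_congr rfl fun i _ => Finset.sum_congr rfl fun j _ => ?_
    rw [map_mul, conj_exp_int_mul_I]
    push_cast
    rw [show ((N i : ℂ) - N j) * t * I = N i * t * I + -N j * t * I by ring, Complex.exp_add]
    ring
  have hcont : ∀ i j : ι,
      Continuous fun t : ℝ => u i * (starRingEnd ℂ) (u j) * cexp ((N i - N j : ℤ) * t * I) :=
    fun i j => continuous_const.mul (continuous_exp_mul_I _)
  apply ofReal_injective
  rw [← intervalIntegral.integral_ofReal]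
  simp_rw [hexpand]
  rw [integral_finsetSum fun i _ =>
    (continuous_finsetSum s fun j _ => hcont i j).intervalIntegrable _ _]
  simp_rw [integral_finsetSum fun j _ => (hcont _ j).intervalIntegrable _ _,
    intervalIntegral.integral_const_mul, integral_exp_int_mul_I]
  push_cast
  rw [Finset.mul_sum]
  refine Finset.sum_congr rfl fun i hi => ?_
  rw [Finset.sum_eq_single_of_mem i hi fun j hj hji => by
      rw [if_neg fun h => hji (hN hj hi (sub_eq_zero.mp h).symm), mul_zero],
    sub_self, if_pos rfl, ← mul_conj']
  ring

section Multivariable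

variable {n : ℕ}

noncomputable def rotate (θ : Fin n → ℝ) (z : Fin n → ℂ) : Fin n → ℂ :=
  fun j => cexp (θ j * I) * z j

def homogeneousPart (a : (Fin n → ℕ) → ℂ) (k : ℕ) (z : Fin n → ℂ) : ℂ :=
  ∑ α ∈ antidiagonalTuple n k, a α * ∏ j, z j ^ α j

theorem prod_rotate_pow (θ : Fin n → ℝ) (z : Fin n → ℂ) (α : Fin n → ℕ) :
    ∏ j, rotate θ z j ^ α j = (∏ j, z j ^ α j) * cexp ((∑ j, α j * θ j : ℝ) * I) := by
  simp_rw [rotate, mul_pow, Finset.prod_mul_distrib, ← Complex.exp_nat_mul, ← Complex.exp_sum]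
  push_cast
  simp_rw [Finset.sum_mul]
  rw [mul_comm]
  congr 2
  exact Finset.sum_congr rfl fun j _ => by ring

theorem prod_rotate_const_pow (t : ℝ) (z : Fin n → ℂ) (α : Fin n → ℕ) :
    ∏ j, rotate (fun _ => t) z j ^ α j = (∏ j, z j ^ α j) * cexp ((∑ j, α j : ℕ) * t * I) := by
  rw [prod_rotate_pow, ← Finset.sum_mul]
  push_cast
  rfl

theorem homogeneousPart_rotate (a : (Fin n → ℕ) → ℂ) (k : ℕ) (θ : Fin n → ℝ) (z : Fin n → ℂ) :
    homogeneousPart a k (rotate θ z)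
      = ∑ α ∈ antidiagonalTuple n k,
          a α * (∏ j, z j ^ α j) * cexp ((∑ j, α j * θ j : ℝ) * I) := by
  simp_rw [homogeneousPart, prod_rotate_pow, mul_assoc]

theorem hasSum_ite_homogeneousPart (a : (Fin n → ℕ) → ℂ) (k : ℕ) (z : Fin n → ℂ) :
    HasSum (fun α => if ∑ j, α j = k then a α * ∏ j, z j ^ α j else 0)
      (homogeneousPart a k z) := by
  have : HasSum _ _ := hasSum_sum_of_ne_finset_zero (s := antidiagonalTuple n k)
    (f := fun α => if ∑ j, α j = k then a α * ∏ j, z j ^ α j else 0)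
    fun α hα => if_neg (mt mem_antidiagonalTuple.mpr hα)
  rwa [Finset.sum_congr rfl fun α hα => if_pos (mem_antidiagonalTuple.mp hα)] at this

/-- The entries of a multi-index of degree `k` are base-`(k+1)` digits. -/
theorem injOn_sum_mul_pow (k : ℕ) :
    Set.InjOn (fun α : Fin n → ℕ => ∑ j, α j * (k + 1) ^ (j : ℕ)) (antidiagonalTuple n k) := by
  intro α hα β hβ hαβ
  have hlt : ∀ γ ∈ (antidiagonalTuple n k : Set (Fin n → ℕ)), ∀ j, γ j < k + 1 := fun γ hγ j =>
    Nat.lt_succ_of_le ((Finset.single_le_sum (fun i _ => Nat.zero_le (γ i))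
      (Finset.mem_univ j)).trans (mem_antidiagonalTuple.mp hγ).le)
  have : (fun j => ⟨α j, hlt α hα j⟩ : Fin n → Fin (k + 1)) = fun j => ⟨β j, hlt β hβ j⟩ :=
    finFunctionFinEquiv.injective (Fin.ext (by simpa [finFunctionFinEquiv_apply] using hαβ))
  funext j
  exact congrArg Fin.val (congrFun this j)

theorem norm_homogeneousPart_add_norm_le {U : Set (Fin n → ℂ)}
    (hU : ∀ t : ℝ, ∀ z ∈ U, rotate (fun _ => t) z ∈ U) {f h g : (Fin n → ℂ) → ℂ}
    {a b : (Fin n → ℕ) → ℂ} (hfd : ∀ z ∈ U, f z = h z + (starRingEnd ℂ) (g z))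
    (hha : ∀ z ∈ U, HasSum (fun α => a α * ∏ j, z j ^ α j) (h z))
    (hgb : ∀ z ∈ U, HasSum (fun α => b α * ∏ j, z j ^ α j) (g z))
    (hmap : ∀ z ∈ U, ‖f z‖ ≤ 1) {k : ℕ} (hk : k ≠ 0) {w : Fin n → ℂ} (hw : w ∈ U) :
    ‖homogeneousPart a k w‖ + ‖homogeneousPart b k w‖ ≤ 4 / π := by
  have hseries : ∀ {c : (Fin n → ℕ) → ℂ} {H : (Fin n → ℂ) → ℂ},
      (∀ z ∈ U, HasSum (fun α => c α * ∏ j, z j ^ α j) (H z)) → ∀ t : ℝ,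
      HasSum (fun α => c α * (∏ j, w j ^ α j) * cexp ((∑ j, α j : ℕ) * t * I))
        (H (rotate (fun _ => t) w)) := fun hH t => by
    simpa only [prod_rotate_const_pow, mul_assoc] using hH _ (hU t w hw)
  have hsummable : ∀ {c : (Fin n → ℕ) → ℂ} {H : (Fin n → ℂ) → ℂ},
      (∀ z ∈ U, HasSum (fun α => c α * ∏ j, z j ^ α j) (H z)) →
      Summable fun α => ‖c α * ∏ j, w j ^ α j‖ := fun hH =>
    summable_norm_iff.mpr (hH w hw).summable
  exact norm_add_norm_le_of_hasSum (hsummable hha) (hsummable hgb) (fun α => ∑ j, α j)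
    (hseries hha) (hseries hgb) (fun t => hfd _ (hU t w hw)) (fun t => hmap _ (hU t w hw)) hk
    (hasSum_ite_homogeneousPart a k w) (hasSum_ite_homogeneousPart b k w)

theorem homogeneousPart_rotate_pow_mul (c : (Fin n → ℕ) → ℂ) (k : ℕ) (z : Fin n → ℂ) (s : ℝ) :
    homogeneousPart c k (rotate (fun j => (k + 1) ^ (j : ℕ) * s) z)
      = ∑ α ∈ antidiagonalTuple n k, c α * (∏ j, z j ^ α j)
          * cexp (((∑ j, α j * (k + 1) ^ (j : ℕ) : ℕ) : ℤ) * s * I) := by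
  rw [homogeneousPart_rotate]
  refine Finset.sum_congr rfl fun α _ => ?_
  push_cast
  simp only [Finset.sum_mul]
  congr 3
  exact funext fun j => by ring

theorem continuous_norm_homogeneousPart_rotate_pow_mul_sq (c : (Fin n → ℕ) → ℂ) (k : ℕ)
    (z : Fin n → ℂ) :
    Continuous fun s : ℝ =>
      ‖homogeneousPart c k (rotate (fun j => (k + 1) ^ (j : ℕ) * s) z)‖ ^ 2 := by
  simp_rw [homogeneousPart_rotate_pow_mul]
  exact ((continuous_finsetSum _ fun α _ =>
    continuous_const.mul (continuous_exp_mul_I _)).norm).pow 2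

theorem integral_norm_homogeneousPart_rotate_pow_mul_sq (c : (Fin n → ℕ) → ℂ) (k : ℕ)
    (z : Fin n → ℂ) :
    ∫ s in (0 : ℝ)..2 * π, ‖homogeneousPart c k (rotate (fun j => (k + 1) ^ (j : ℕ) * s) z)‖ ^ 2
      = 2 * π * ∑ α ∈ antidiagonalTuple n k, ‖c α‖ ^ 2 * ‖∏ j, z j ^ α j‖ ^ 2 := by
  have hN : Set.InjOn (fun α : Fin n → ℕ => ((∑ j, α j * (k + 1) ^ (j : ℕ) : ℕ) : ℤ))
      (antidiagonalTuple n k) := fun α hα β hβ h =>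
    injOn_sum_mul_pow k hα hβ (Int.ofNat_inj.mp h)
  simp_rw [homogeneousPart_rotate_pow_mul, integral_norm_sum_mul_exp_sq _ _ hN, norm_mul, mul_pow]

theorem sum_norm_sq_le_of_norm_homogeneousPart_rotate_le {a b : (Fin n → ℕ) → ℂ} {k : ℕ}
    {z : Fin n → ℂ} {M : ℝ}
    (hM : ∀ θ : Fin n → ℝ,
      ‖homogeneousPart a k (rotate θ z)‖ + ‖homogeneousPart b k (rotate θ z)‖ ≤ M) :
    ∑ α ∈ antidiagonalTuple n k, (‖a α‖ ^ 2 + ‖b α‖ ^ 2) * ‖∏ j, z j ^ α j‖ ^ 2 ≤ M ^ 2 := by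
  set θ : ℝ → Fin n → ℝ := fun s j => (k + 1) ^ (j : ℕ) * s
  have hcont := continuous_norm_homogeneousPart_rotate_pow_mul_sq (k := k) (z := z)
  have h2π : (0 : ℝ) < 2 * π := by positivity
  have hbound : ∀ s : ℝ, ‖homogeneousPart a k (rotate (θ s) z)‖ ^ 2
      + ‖homogeneousPart b k (rotate (θ s) z)‖ ^ 2 ≤ M ^ 2 := fun s => by
    nlinarith [hM (θ s), norm_nonneg (homogeneousPart a k (rotate (θ s) z)),
      norm_nonneg (homogeneousPart b k (rotate (θ s) z))]
  refine le_of_mul_le_mul_left ?_ h2π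
  calc 2 * π * ∑ α ∈ antidiagonalTuple n k, (‖a α‖ ^ 2 + ‖b α‖ ^ 2) * ‖∏ j, z j ^ α j‖ ^ 2
      = ∫ s in (0 : ℝ)..2 * π, ‖homogeneousPart a k (rotate (θ s) z)‖ ^ 2
          + ‖homogeneousPart b k (rotate (θ s) z)‖ ^ 2 := by
        rw [integral_add ((hcont a).intervalIntegrable _ _) ((hcont b).intervalIntegrable _ _),
          integral_norm_homogeneousPart_rotate_pow_mul_sq,
          integral_norm_homogeneousPart_rotate_pow_mul_sq, ← mul_add, ← Finset.sum_add_distrib]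
        simp_rw [add_mul]
    _ ≤ ∫ _ in (0 : ℝ)..2 * π, M ^ 2 :=
        integral_mono_on h2π.le (((hcont a).add (hcont b)).intervalIntegrable _ _)
          intervalIntegrable_const fun s _ => hbound s
    _ = 2 * π * M ^ 2 := by simp

theorem pnormE_rotate (p : ℝ≥0∞) (θ : Fin n → ℝ) (z : Fin n → ℂ) :
    pnormE p (rotate θ z) = pnormE p z := by
  simp only [pnormE, rotate, norm_mul, norm_exp_ofReal_mul_I, one_mul]

theorem tsum_subtype_sum_eq_sum_antidiagonalTuple {E : Type*} [AddCommMonoid E]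
    [TopologicalSpace E] (F : (Fin n → ℕ) → E) (k : ℕ) :
    ∑' β : {β : Fin n → ℕ // ∑ i, β i = k}, F β = ∑ β ∈ antidiagonalTuple n k, F β := by
  rw [← Finset.tsum_subtype,
    ← (Equiv.subtypeEquivRight fun β => mem_antidiagonalTuple.symm).tsum_eq]
  rfl

end Multivariable

theorem stmt19_general (n : ℕ) (p : ℝ≥0∞)
    (f h g : (Fin n → ℂ) → ℂ) (a b : (Fin n → ℕ) → ℂ)
    (hfd : ∀ z : Fin n → ℂ, pnormE p z < 1 → f z = h z + (starRingEnd ℂ) (g z))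
    (hha : ∀ z : Fin n → ℂ, pnormE p z < 1 →
      HasSum (fun α : Fin n → ℕ => a α * ∏ k, z k ^ α k) (h z))
    (hgb : ∀ z : Fin n → ℂ, pnormE p z < 1 →
      HasSum (fun α : Fin n → ℕ => b α * ∏ k, z k ^ α k) (g z))
    (hmap : ∀ z : Fin n → ℂ, pnormE p z < 1 → ‖f z‖ < 1)
    (k : ℕ) (hk : 1 ≤ k) (z : Fin n → ℂ) (hz : pnormE p z < 1) :
    -- the (finite) sum over all multi-indices `β` with `|β| = k`
    ∑' β : {β : Fin n → ℕ // ∑ i, β i = k},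
        (‖a β.1‖ ^ 2 + ‖b β.1‖ ^ 2) * ‖∏ i, z i ^ β.1 i‖ ^ 2 ≤
      16 / Real.pi ^ 2 := by
  have hrot : ∀ θ : Fin n → ℝ, ∀ w, pnormE p w < 1 → pnormE p (rotate θ w) < 1 :=
    fun θ w hw => (pnormE_rotate p θ w).symm ▸ hw
  have hbound : ∀ θ : Fin n → ℝ,
      ‖homogeneousPart a k (rotate θ z)‖ + ‖homogeneousPart b k (rotate θ z)‖ ≤ 4 / π :=
    fun θ => norm_homogeneousPart_add_norm_le (U := {w | pnormE p w < 1}) (fun _ => hrot _)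
      hfd hha hgb (fun w hw => (hmap w hw).le) (by omega) (hrot θ z hz)
  rw [tsum_subtype_sum_eq_sum_antidiagonalTuple
    fun β => (‖a β‖ ^ 2 + ‖b β‖ ^ 2) * ‖∏ i, z i ^ β i‖ ^ 2]
  calc _ ≤ (4 / π) ^ 2 := sum_norm_sq_le_of_norm_homogeneousPart_rotate_le hbound
    _ = 16 / π ^ 2 := by ring

theorem stmt19 (n : ℕ) (hn : 1 ≤ n) (p : ℝ≥0∞) (hp : 1 ≤ p)
    (f h g : (Fin n → ℂ) → ℂ) (a b : (Fin n → ℕ) → ℂ) (hb0 : b 0 = 0)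
    (hh : DifferentiableOn ℂ h {z | pnormE p z < 1})
    (hg : DifferentiableOn ℂ g {z | pnormE p z < 1})
    (hg0 : g 0 = 0)
    (hfd : ∀ z : Fin n → ℂ, pnormE p z < 1 → f z = h z + (starRingEnd ℂ) (g z))
    (hha : ∀ z : Fin n → ℂ, pnormE p z < 1 →
      HasSum (fun α : Fin n → ℕ => a α * ∏ k, z k ^ α k) (h z))
    (hgb : ∀ z : Fin n → ℂ, pnormE p z < 1 →
      HasSum (fun α : Fin n → ℕ => b α * ∏ k, z k ^ α k) (g z))
    (hmap : ∀ z : Fin n → ℂ, pnormE p z < 1 → ‖f z‖ < 1)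
    (k : ℕ) (hk : 1 ≤ k) (z : Fin n → ℂ) (hz : pnormE p z < 1) :
    -- the (finite) sum over all multi-indices `β` with `|β| = k`
    ∑' β : {β : Fin n → ℕ // ∑ i, β i = k},
        (‖a β.1‖ ^ 2 + ‖b β.1‖ ^ 2) * ‖∏ i, z i ^ β.1 i‖ ^ 2 ≤
      16 / Real.pi ^ 2 :=
  stmt19_general n p f h g a b hfd hha hgb hmap k hk z hz
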